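/- Let G be a finite simple graph and let k ≥ 4 be an even integer. A real number λ is an adjacency H-eigenvalue of the generalized power hypergraph G^{k,k/2} if and only if there exists a nonempty subset U ⊆ V(G) such that the induced subgraph G[U] is connected and λ is an eigenvalue of the adjacency matrix A(G[U]) of G[U]. -/

import Mathlib

/-!
Multiplying the eigen-equation at `(v, j)` by `x (v, j)` turns it into
`λ x(v,j)^k = P(v) ∑_{u ~ v} P(u)` with `P(v) = ∏_j x(v,j)`. For `λ ≠ 0` all the `x(v,j)^k`
then agree, so `P(v)² = x(v,j)^k` and `P` satisfies `A P = λ P` at every vertex of its support;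
on a maximal connected piece `U` of the support this is an eigenvector of `A(G[U])`, since
the neighbours of `U` outside `U` carry `P = 0`. For `λ = 0` a single vertex suffices.
Conversely, extend an eigenvector `y` of `A(G[U])` by zero and split each `y_v` into `s` real
factors of absolute value `|y_v|^{1/s}`; at vertices where `y_v = 0`, every edge through
`(v, j)` still contains another zero coordinate `(v, j')` because `s ≥ 2`.
-/

open Finset

/-- The edge set of the generalized power hypergraph `G^{k, k/2}` (with `s = k/2`):
each edge `{u,v}` of `G` is blown up into the `2s`-set `({u} × Fin s) ∪ ({v} × Fin s)`. -/
def powerEdges {V : Type*} [Fintype V] [DecidableEq V] (G : SimpleGraph V)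
    [DecidableRel G.Adj] (s : ℕ) : Finset (Finset (V × Fin s)) :=
  (Finset.univ.filter fun p : V × V => G.Adj p.1 p.2).image
    (fun p => ({p.1} ×ˢ (Finset.univ : Finset (Fin s)))
        ∪ ({p.2} ×ˢ (Finset.univ : Finset (Fin s))))

/-- `lam` is an adjacency H-eigenvalue of the generalized power hypergraph `G^{k,s}`
(`k = 2s`) with H-eigenvector `x`. -/
def IsAdjHEigPow {V : Type*} [Fintype V] [DecidableEq V] (G : SimpleGraph V)
    [DecidableRel G.Adj] (k s : ℕ) (lam : ℝ) (x : V × Fin s → ℝ) : Prop :=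
  x ≠ 0 ∧ ∀ p : V × Fin s,
    lam * x p ^ (k - 1)
      = ∑ e ∈ (powerEdges G s).filter (fun e => p ∈ e), ∏ w ∈ e.erase p, x w

/-- `lam` is a signless Laplacian H-eigenvalue of the generalized power hypergraph
`G^{k,s}` (`k = 2s`) with H-eigenvector `x`. -/
def IsQHEigPow {V : Type*} [Fintype V] [DecidableEq V] (G : SimpleGraph V)
    [DecidableRel G.Adj] (k s : ℕ) (lam : ℝ) (x : V × Fin s → ℝ) : Prop :=
  x ≠ 0 ∧ ∀ p : V × Fin s,
    lam * x p ^ (k - 1)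
      = (((powerEdges G s).filter (fun e => p ∈ e)).card : ℝ) * x p ^ (k - 1)
        + ∑ e ∈ (powerEdges G s).filter (fun e => p ∈ e), ∏ w ∈ e.erase p, x w

lemma sq_prod_eq_of_forall_pow_eq {ι : Type*} [Fintype ι] [Nonempty ι] (f : ι → ℝ) {c : ℝ}
    (hf : ∀ i, f i ^ (2 * Fintype.card ι) = c) : (∏ i, f i) ^ 2 = c := by
  obtain ⟨i₀⟩ := ‹Nonempty ι›
  have hc : 0 ≤ c := by rw [← hf i₀]; exact (even_two_mul _).pow_nonneg _
  refine (pow_left_inj₀ (sq_nonneg _) hc (Fintype.card_ne_zero (α := ι))).1 ?_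
  rw [← pow_mul, ← prod_pow, prod_congr rfl fun i _ => hf i, prod_const, card_univ]

lemma exists_prod_eq_of_abs_eq_rpow (a : ℝ) {s : ℕ} (hs : s ≠ 0) :
    ∃ f : Fin s → ℝ, ∏ i, f i = a ∧ ∀ i, |f i| = |a| ^ (s⁻¹ : ℝ) := by
  obtain ⟨n, rfl⟩ := Nat.exists_eq_succ_of_ne_zero hs
  set r := |a| ^ ((n + 1 : ℕ)⁻¹ : ℝ)
  have hr0 : 0 ≤ r := by positivity
  have hr : r ^ (n + 1) = |a| := Real.rpow_inv_natCast_pow (abs_nonneg a) hs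
  refine ⟨Fin.cons (SignType.sign a * r) fun _ => r, ?_, fun i => ?_⟩
  · rw [Fin.prod_cons, prod_const, card_univ, Fintype.card_fin, mul_assoc, ← pow_succ', hr,
      sign_mul_abs]
  · refine Fin.cases ?_ (fun _ => ?_) i
    · rcases lt_trichotomy a 0 with ha | rfl | ha
      · simp [ha, abs_of_nonneg hr0]
      · simpa [eq_comm] using pow_eq_zero_iff (Nat.succ_ne_zero n) |>.1 (hr.trans abs_zero)
      · simp [ha, abs_of_nonneg hr0]
    · simp [abs_of_nonneg hr0]

section ClosedConnectedSubset

variable {V : Type*} [DecidableEq V] (G : SimpleGraph V)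

lemma exists_closed_connected_subset (W : Finset V) {v : V} (hv : v ∈ W) :
    ∃ U ⊆ W, v ∈ U ∧ (G.induce (U : Set V)).Connected ∧
      ∀ u ∈ U, ∀ b ∈ W, G.Adj u b → b ∈ U := by
  classical
  set S : Finset (Finset V) :=
    W.powerset.filter fun U : Finset V => v ∈ U ∧ (G.induce (U : Set V)).Connected
  have hsingle : {v} ∈ S := by
    simp only [S, mem_filter, mem_powerset, singleton_subset_iff, mem_singleton, true_and]
    refine ⟨hv, ?_⟩
    rw [coe_singleton]
    exact .of_subsingleton
  obtain ⟨U, hUS, hmax⟩ := S.exists_max_image card ⟨_, hsingle⟩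
  obtain ⟨hUW, hvU, hconn⟩ : U ⊆ W ∧ v ∈ U ∧ (G.induce (U : Set V)).Connected := by
    simpa only [S, mem_filter, mem_powerset] using hUS
  refine ⟨U, hUW, hvU, hconn, fun u hu b hb hub => ?_⟩
  by_contra hbU
  have hins : insert b U ∈ S := by
    have hcoe : ((insert b U : Finset V) : Set V) = (U : Set V) ∪ {u, b} := by
      ext w; simp only [coe_insert, Set.mem_insert_iff, mem_coe, Set.mem_union]; aesop
    simp only [S, mem_filter, mem_powerset, insert_subset_iff, mem_insert]
    rw [hcoe]
    exact ⟨⟨hb, hUW⟩, .inr hvU, G.connected_induce_union hconn.preconnected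
      (G.induce_pair_connected_of_adj hub).preconnected hu (by simp) hub⟩
  have := hmax _ hins
  rw [card_insert_of_notMem hbU] at this
  omega

end ClosedConnectedSubset

section InducedEigenvectors

variable {V : Type*} [Fintype V] (G : SimpleGraph V) [DecidableRel G.Adj]

/-- Equivalently: `z` restricted to its support `W` is an eigenvector of `A(G[W])`. -/
def IsEigenvectorOnSupport (lam : ℝ) (z : V → ℝ) : Prop :=
  z ≠ 0 ∧ ∀ v, z v ≠ 0 → ∑ u ∈ G.neighborFinset v, z u = lam * z v

lemma mulVec_induce_apply (U : Finset V) (z : V → ℝ) (u : {v : V // v ∈ U})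
    (hz : ∀ b ∉ U, G.Adj u b → z b = 0) :
    (Matrix.of fun u w : {v : V // v ∈ U} => if G.Adj u.1 w.1 then (1 : ℝ) else 0).mulVec
      (fun w => z w) u = ∑ b ∈ G.neighborFinset u, z b := by
  simp only [Matrix.mulVec, dotProduct, Matrix.of_apply, ite_mul, one_mul, zero_mul]
  rw [sum_coe_sort U fun b => if G.Adj u b then z b else 0,
    sum_subset (subset_univ U) fun b _ hb => by split_ifs with hub <;> simp [hz b hb, hub],
    SimpleGraph.neighborFinset_eq_filter, sum_filter]

variable [DecidableEq V]

lemma isEigenvectorOnSupport_single (v : V) : IsEigenvectorOnSupport G 0 (Pi.single v 1) := by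
  refine ⟨fun h => by simpa using congrFun h v, fun u hu => ?_⟩
  obtain rfl : u = v := by by_contra h; exact hu (Pi.single_eq_of_ne h 1)
  rw [zero_mul]
  exact sum_eq_zero fun w hw =>
    Pi.single_eq_of_ne (G.ne_of_adj ((G.mem_neighborFinset u w).1 hw)).symm 1

theorem exists_isEigenvectorOnSupport_iff (lam : ℝ) :
    (∃ z, IsEigenvectorOnSupport G lam z) ↔
    ∃ U : Finset V, U.Nonempty ∧ (G.induce (U : Set V)).Connected ∧
      ∃ y : {v : V // v ∈ U} → ℝ, y ≠ 0 ∧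
        (Matrix.of fun u w : {v : V // v ∈ U} =>
            if G.Adj u.1 w.1 then (1 : ℝ) else 0).mulVec y = lam • y := by
  constructor
  · rintro ⟨z, hz0, hz⟩
    obtain ⟨v, hv⟩ := Function.ne_iff.1 hz0
    obtain ⟨U, hUW, hvU, hconn, hclosed⟩ :=
      exists_closed_connected_subset G (univ.filter fun w => z w ≠ 0) (by simpa using hv)
    have hsupp : ∀ u ∈ U, z u ≠ 0 := fun u hu => (mem_filter.1 (hUW hu)).2
    refine ⟨U, ⟨v, hvU⟩, hconn, fun w => z w, fun h => hv (congrFun h ⟨v, hvU⟩), ?_⟩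
    funext u
    rw [mulVec_induce_apply G U z u fun b hb hub => ?_, hz u (hsupp u u.2), Pi.smul_apply,
      smul_eq_mul]
    by_contra hzb
    exact hb (hclosed u u.2 b (by simpa using hzb) hub)
  · rintro ⟨U, -, -, y, hy0, hy⟩
    set z : V → ℝ := fun v => if h : v ∈ U then y ⟨v, h⟩ else 0
    have hzy : (fun w : {v : V // v ∈ U} => z w) = y := funext fun w => dif_pos w.2
    have hzU : ∀ v, z v ≠ 0 → v ∈ U := fun v hv => by by_contra h; exact hv (dif_neg h)
    refine ⟨z, fun h => hy0 (by rw [← hzy, h]; rfl), fun v hv => ?_⟩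
    have := congrFun hy ⟨v, hzU v hv⟩
    rwa [← hzy, mulVec_induce_apply G U z _ fun b hb _ => dif_neg hb] at this

end InducedEigenvectors

section PowerHypergraph

variable {V : Type*} [Fintype V] [DecidableEq V] (G : SimpleGraph V) [DecidableRel G.Adj]
  {s : ℕ} {lam : ℝ}

def fiberProd (x : V × Fin s → ℝ) (v : V) : ℝ := ∏ j, x (v, j)

lemma powerEdges_eq_image (s : ℕ) :
    powerEdges G s = (univ.filter fun p : V × V => G.Adj p.1 p.2).image
      fun p => ({p.1, p.2} : Finset V) ×ˢ (univ : Finset (Fin s)) := by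
  simp only [powerEdges, ← union_product, insert_eq]

lemma filter_mem_powerEdges (v : V) (j : Fin s) :
    (powerEdges G s).filter (fun e => (v, j) ∈ e)
      = (G.neighborFinset v).image
          fun u => ({v, u} : Finset V) ×ˢ (univ : Finset (Fin s)) := by
  ext e
  simp only [powerEdges_eq_image, mem_filter, mem_image, mem_univ, true_and,
    SimpleGraph.mem_neighborFinset, Prod.exists]
  constructor
  · rintro ⟨⟨a, b, hab, rfl⟩, hv⟩
    simp only [mem_product, mem_insert, mem_singleton, mem_univ, and_true] at hv
    rcases hv with rfl | rfl
    · exact ⟨b, hab, rfl⟩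
    · exact ⟨a, hab.symm, by rw [pair_comm]⟩
  · rintro ⟨u, hu, rfl⟩
    exact ⟨⟨v, u, hu, rfl⟩, by simp⟩

lemma sum_prod_filter_mem_powerEdges (x : V × Fin s → ℝ) (v : V) (j : Fin s) :
    ∑ e ∈ (powerEdges G s).filter (fun e => (v, j) ∈ e), ∏ w ∈ e, x w
      = fiberProd x v * ∑ u ∈ G.neighborFinset v, fiberProd x u := by
  have hne : ∀ {u}, u ∈ G.neighborFinset v → v ≠ u := fun hu =>
    G.ne_of_adj ((G.mem_neighborFinset v _).1 hu)
  rw [filter_mem_powerEdges, sum_image, mul_sum]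
  · refine sum_congr rfl fun u hu => ?_
    rw [prod_product, prod_pair (hne hu)]
    rfl
  · intro u hu u' _ huu'
    have hmem : (u, j) ∈ ({v, u'} : Finset V) ×ˢ (univ : Finset (Fin s)) := by
      simp only at huu'
      rw [← huu']; simp
    simpa [(hne hu).symm] using hmem

lemma mul_sum_prod_erase_filter_mem_powerEdges (x : V × Fin s → ℝ) (v : V) (j : Fin s) :
    x (v, j) * ∑ e ∈ (powerEdges G s).filter (fun e => (v, j) ∈ e),
        ∏ w ∈ e.erase (v, j), x w
      = fiberProd x v * ∑ u ∈ G.neighborFinset v, fiberProd x u := by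
  rw [mul_sum, ← sum_prod_filter_mem_powerEdges]
  exact sum_congr rfl fun e he => mul_prod_erase e x (mem_filter.1 he).2

lemma IsAdjHEigPow.mul_pow_eq {k : ℕ} (hk : k ≠ 0) {x : V × Fin s → ℝ}
    (hx : IsAdjHEigPow G k s lam x) (v : V) (j : Fin s) :
    lam * x (v, j) ^ k = fiberProd x v * ∑ u ∈ G.neighborFinset v, fiberProd x u := by
  rw [← mul_sum_prod_erase_filter_mem_powerEdges, ← hx.2 (v, j), ← pow_sub_one_mul hk]
  ring

theorem IsAdjHEigPow.exists_isEigenvectorOnSupport {x : V × Fin s → ℝ}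
    (hx : IsAdjHEigPow G (2 * s) s lam x) : ∃ z, IsEigenvectorOnSupport G lam z := by
  obtain ⟨⟨v₀, j₀⟩, hx₀⟩ := Function.ne_iff.1 hx.1
  rcases eq_or_ne lam 0 with rfl | hlam
  · exact ⟨_, isEigenvectorOnSupport_single G v₀⟩
  have heq := hx.mul_pow_eq G (by have := j₀.pos; omega)
  refine ⟨fiberProd x, fun h => hx₀ ?_, fun v hv => mul_left_cancel₀ hv ?_⟩
  · have h₀ := heq v₀ j₀
    simp only [h, Pi.zero_apply, zero_mul, mul_eq_zero, hlam, false_or] at h₀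
    exact eq_zero_of_pow_eq_zero h₀
  · have : Nonempty (Fin s) := ⟨j₀⟩
    have hpow : ∀ j, x (v, j) ^ (2 * Fintype.card (Fin s)) = x (v, j₀) ^ (2 * s) := by
      intro j
      rw [Fintype.card_fin]
      exact mul_left_cancel₀ hlam ((heq v j).trans (heq v j₀).symm)
    have hsq : fiberProd x v ^ 2 = x (v, j₀) ^ (2 * s) := sq_prod_eq_of_forall_pow_eq _ hpow
    rw [← heq v j₀, ← hsq]
    ring

theorem IsEigenvectorOnSupport.exists_isAdjHEigPow (hs : 2 ≤ s) {z : V → ℝ}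
    (hz : IsEigenvectorOnSupport G lam z) :
    ∃ x : V × Fin s → ℝ, IsAdjHEigPow G (2 * s) s lam x := by
  choose f hprod habs using fun v => exists_prod_eq_of_abs_eq_rpow (z v) (s := s) (by omega)
  set x : V × Fin s → ℝ := fun p => f p.1 p.2
  have hP : fiberProd x = z := funext hprod
  have hpow : ∀ v j, x (v, j) ^ (2 * s) = z v ^ 2 := fun v j => by
    rw [← (even_two_mul s).pow_abs, habs, pow_mul',
      Real.rpow_inv_natCast_pow (abs_nonneg _) (by omega), sq_abs]
  have hzero : ∀ v j, z v = 0 → x (v, j) = 0 := fun v j hv => by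
    rw [← abs_eq_zero, habs, hv, abs_zero, Real.zero_rpow (by positivity)]
  refine ⟨x, fun h => hz.1 ?_, fun ⟨v, j⟩ => ?_⟩
  · rw [← hP, h]
    ext v
    exact prod_eq_zero (i := ⟨0, by omega⟩) (mem_univ _) rfl
  by_cases hv : z v = 0
  · have : Nontrivial (Fin s) := Fin.nontrivial_iff_two_le.2 hs
    obtain ⟨j', hj'⟩ := exists_ne j
    rw [hzero v j hv, zero_pow (by omega), mul_zero, eq_comm]
    refine sum_eq_zero fun e he => prod_eq_zero (i := (v, j')) ?_ (hzero v j' hv)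
    rw [filter_mem_powerEdges] at he
    obtain ⟨u, -, rfl⟩ := mem_image.1 he
    simp [hj']
  · have hx : x (v, j) ≠ 0 := fun h => hv (hprod v ▸ prod_eq_zero (mem_univ j) h)
    apply mul_left_cancel₀ hx
    rw [mul_sum_prod_erase_filter_mem_powerEdges, hP, hz.2 v hv, mul_left_comm,
      mul_pow_sub_one (by omega), hpow]
    ring

theorem exists_isAdjHEigPow_iff (hs : 2 ≤ s) :
    (∃ x : V × Fin s → ℝ, IsAdjHEigPow G (2 * s) s lam x) ↔
      ∃ z, IsEigenvectorOnSupport G lam z :=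
  ⟨fun ⟨_, hx⟩ => hx.exists_isEigenvectorOnSupport G,
    fun ⟨_, hz⟩ => hz.exists_isAdjHEigPow G hs⟩

end PowerHypergraph

/-- `λ` is an adjacency H-eigenvalue of `G^{k,k/2}` iff there is a nonempty
`U ⊆ V(G)` with `G[U]` connected such that `λ` is an eigenvalue of the adjacency matrix of
the induced subgraph `G[U]`. -/
theorem stmt13 {V : Type*} [Fintype V] [DecidableEq V] (G : SimpleGraph V)
    [DecidableRel G.Adj] (k s : ℕ) (hk : 4 ≤ k) (hks : k = 2 * s) (lam : ℝ) :
    (∃ x : V × Fin s → ℝ, IsAdjHEigPow G k s lam x) ↔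
    ∃ U : Finset V, U.Nonempty ∧ (G.induce (U : Set V)).Connected ∧
      ∃ y : {v : V // v ∈ U} → ℝ, y ≠ 0 ∧
        (Matrix.of fun u w : {v : V // v ∈ U} =>
            if G.Adj u.1 w.1 then (1 : ℝ) else 0).mulVec y = lam • y := by
  subst hks
  exact (exists_isAdjHEigPow_iff G (by omega)).trans (exists_isEigenvectorOnSupport_iff G lam)
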